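/- arXiv:2404.16817 — 4 statements merged into one kernel-verified Lean document; each statement's English description precedes it below -/
import Mathlib

section
/- Let A be a symmetric positive definite real d×d matrix satisfying the Diophantine admissibility condition with parameter τ. Define λ_n² := nᵀAn for n ∈ ℤ^d and the resonant function Ω(n₁,n₂,n₃,n) := λ_{n₁}² - λ_{n₂}² + λ_{n₃}² - λ_n². Then the four-wave resonant set Γ₀ = { (n₁,n₂,n₃,n) ∈ (ℤ^d)⁴ : n₁ - n₂ + n₃ = n and Ω(n₁,n₂,n₃,n) = 0 } equals the set of quadruples (n₁,n₂,n₃,n) with n₁ - n₂ + n₃ = n such that {n₁,n₃} = {n,n₂} as multisets. -/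
open scoped BigOperators

/-- Euclidean (ℓ²) norm of an integer vector. -/
noncomputable def znorm {d : ℕ} (n : Fin d → ℤ) : ℝ :=
  Real.sqrt (∑ i, ((n i : ℝ)) ^ 2)

/-- The bilinear form `aᵀ A b` for integer vectors `a`, `b`. -/
noncomputable def quadA {d : ℕ} (A : Matrix (Fin d) (Fin d) ℝ) (a b : Fin d → ℤ) : ℝ :=
  dotProduct (fun i => (a i : ℝ)) (A.mulVec (fun i => (b i : ℝ)))

/-- `λ_n² := nᵀ A n`. -/
noncomputable def lamSq {d : ℕ} (A : Matrix (Fin d) (Fin d) ℝ) (n : Fin d → ℤ) : ℝ :=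
  quadA A n n

/-- The resonant function `Ω(n₁,n₂,n₃,n) = λ_{n₁}² - λ_{n₂}² + λ_{n₃}² - λ_n²`. -/
noncomputable def Om {d : ℕ} (A : Matrix (Fin d) (Fin d) ℝ) (n₁ n₂ n₃ n : Fin d → ℤ) : ℝ :=
  lamSq A n₁ - lamSq A n₂ + lamSq A n₃ - lamSq A n

lemma zcast_sub {d : ℕ} (a b : Fin d → ℤ) :
    (fun i => ((a - b) i : ℝ)) = (fun i => (a i : ℝ)) - (fun i => (b i : ℝ)) := by
  funext i; simp

lemma zcast_add {d : ℕ} (a b : Fin d → ℤ) :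
    (fun i => ((a + b) i : ℝ)) = (fun i => (a i : ℝ)) + (fun i => (b i : ℝ)) := by
  funext i; simp

lemma bsym {d : ℕ} {A : Matrix (Fin d) (Fin d) ℝ} (hsymm : A.IsSymm)
    (x y : Fin d → ℝ) :
    dotProduct x (A.mulVec y) = dotProduct y (A.mulVec x) := by
  rw [Matrix.dotProduct_mulVec, ← Matrix.mulVec_transpose, hsymm.eq,
    dotProduct_comm]

lemma om_key {d : ℕ} {A : Matrix (Fin d) (Fin d) ℝ} (hsymm : A.IsSymm)
    (n₁ n₂ n₃ : Fin d → ℤ) :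
    Om A n₁ n₂ n₃ (n₁ - n₂ + n₃) = 2 * quadA A (n₁ - n₂) (n₂ - n₃) := by
  unfold Om lamSq quadA
  simp only [zcast_add, zcast_sub]
  set u1 := (fun i => (n₁ i : ℝ))
  set u2 := (fun i => (n₂ i : ℝ))
  set u3 := (fun i => (n₃ i : ℝ))
  simp only [Matrix.mulVec_add, Matrix.mulVec_sub, dotProduct_add,
    dotProduct_sub, add_dotProduct, sub_dotProduct]
  linear_combination (bsym hsymm u2 u1) - (bsym hsymm u3 u1) + (bsym hsymm u3 u2)

lemma znorm_pos {d : ℕ} {a : Fin d → ℤ} (ha : a ≠ 0) : 0 < znorm a := by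
  apply Real.sqrt_pos.2
  obtain ⟨i, hi⟩ := Function.ne_iff.1 ha
  have h0 : (0 : ℝ) < (a i : ℝ) ^ 2 := by
    have : (a i : ℝ) ≠ 0 := by exact_mod_cast hi
    positivity
  exact lt_of_lt_of_le h0 (Finset.single_le_sum (f := fun j => ((a j : ℝ)) ^ 2)
    (fun j _ => by positivity) (Finset.mem_univ i))

/-- For an admissible (Diophantine) symmetric positive definite matrix `A`, the four-wave
resonant set `Γ₀` equals the set of quadruples with zero momentum and `{n₁,n₃} = {n,n₂}`
as multisets. -/
theorem stmt1 {d : ℕ} (A : Matrix (Fin d) (Fin d) ℝ) (hsymm : A.IsSymm) (hpos : A.PosDef)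
    (c τ : ℝ) (hc : 0 < c) (hτ : 0 < τ)
    (hdio : ∀ a b : Fin d → ℤ, a ≠ 0 → b ≠ 0 →
      c / (znorm a ^ τ * znorm b ^ τ) ≤ |quadA A a b|) :
    {v : (Fin d → ℤ) × (Fin d → ℤ) × (Fin d → ℤ) × (Fin d → ℤ) |
        v.1 - v.2.1 + v.2.2.1 = v.2.2.2 ∧ Om A v.1 v.2.1 v.2.2.1 v.2.2.2 = 0}
      =
    {v : (Fin d → ℤ) × (Fin d → ℤ) × (Fin d → ℤ) × (Fin d → ℤ) |
        v.1 - v.2.1 + v.2.2.1 = v.2.2.2 ∧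
        ({v.1, v.2.2.1} : Multiset (Fin d → ℤ)) = {v.2.2.2, v.2.1}} := by
  ext ⟨n₁, n₂, n₃, n⟩
  simp only [Set.mem_setOf_eq]
  constructor
  · rintro ⟨hm, hom⟩
    refine ⟨hm, ?_⟩
    subst hm
    rw [om_key hsymm] at hom
    have hab : n₁ - n₂ = 0 ∨ n₂ - n₃ = 0 := by
      by_contra h
      push_neg at h
      obtain ⟨ha, hb⟩ := h
      have h1 := hdio _ _ ha hb
      have hq : quadA A (n₁ - n₂) (n₂ - n₃) = 0 := by linarith
      rw [hq, abs_zero] at h1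
      have hp : 0 < c / (znorm (n₁ - n₂) ^ τ * znorm (n₂ - n₃) ^ τ) := by
        have h2 := znorm_pos ha
        have h3 := znorm_pos hb
        positivity
      linarith
    rcases hab with h | h
    · have he : n₁ = n₂ := by rwa [sub_eq_zero] at h
      subst he
      have hn : n₁ - n₁ + n₃ = n₃ := by abel
      rw [hn]
      exact Multiset.cons_swap _ _ _
    · have he : n₂ = n₃ := by rwa [sub_eq_zero] at h
      subst he
      have hn : n₁ - n₂ + n₂ = n₁ := by abel
      rw [hn]
  · rintro ⟨hm, hpair⟩
    refine ⟨hm, ?_⟩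
    subst hm
    rcases Multiset.cons_eq_cons.1 hpair with ⟨h1, h3⟩ | ⟨_, cs, h1, h2⟩
    · rw [Multiset.singleton_inj] at h3
      subst h3
      have hn : n₁ - n₃ + n₃ = n₁ := by abel
      rw [hn]
      unfold Om
      ring
    · rw [Multiset.singleton_eq_cons_iff] at h2
      obtain ⟨h2, -⟩ := h2
      subst h2
      have hn : n₂ - n₂ + n₃ = n₃ := by abel
      rw [hn]
      unfold Om
      ring
end

section
/- Let φ be a bounded measurable function on ℝ, and for t > 0 define r(t,x) := ∫_ℝ e^{-ixz/(2t)} (e^{iz²/(4t)} − 1) f(z) dz. If x·f ∈ L²(ℝ), then |r(t,x)| ≤ C t^{-1/4} ‖z f(z)‖_{L²(ℝ)} for all x ∈ ℝ and t ≥ 1, with a universal constant C. -/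
open MeasureTheory Complex Set
open scoped Real

/-- `‖z f(z)‖_{L²(ℝ)}`. -/
noncomputable def weightedL2 (f : ℝ → ℂ) : ℝ :=
  (∫ z : ℝ, |z| ^ 2 * ‖f z‖ ^ 2) ^ (1/2 : ℝ)

/-- `r(t,x) := ∫_ℝ e^{-ixz/(2t)} (e^{iz²/(4t)} − 1) f(z) dz`. -/
noncomputable def rIntegral (f : ℝ → ℂ) (t x : ℝ) : ℂ :=
  ∫ z : ℝ, Complex.exp (-I * x * z / (2 * t)) * (Complex.exp (I * (z : ℂ) ^ 2 / (4 * t)) - 1) * f z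

lemma aux_norm_le (θ : ℝ) : ‖Complex.exp (θ * I) - 1‖ ≤ |θ| := by
  rw [← pow_le_pow_iff_left₀ (norm_nonneg _) (abs_nonneg θ) (two_ne_zero)]
  have h1 : ‖Complex.exp (θ * I) - 1‖ ^ 2 = 2 - 2 * Real.cos θ := by
    rw [Complex.exp_mul_I, Complex.sq_norm]
    simp [Complex.normSq_apply, Complex.cos_ofReal_re, Complex.sin_ofReal_re]
    nlinarith [Real.sin_sq_add_cos_sq θ]
  rw [h1, _root_.sq_abs]
  nlinarith [Real.one_sub_sq_div_two_le_cos (x := θ)]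

lemma aux_norm_le2 (θ : ℝ) : ‖Complex.exp (θ * I) - 1‖ ≤ 2 := by
  calc ‖Complex.exp (θ * I) - 1‖ ≤ ‖Complex.exp (θ * I)‖ + ‖(1:ℂ)‖ := norm_sub_le _ _
  _ ≤ 2 := by
      rw [Complex.norm_exp_ofReal_mul_I]
      norm_num

/-- If `x·f ∈ L²(ℝ)` then `|r(t,x)| ≤ C t^{-1/4} ‖z f(z)‖_{L²}` for all `x ∈ ℝ`, `t ≥ 1`,
with a universal constant `C`. -/
theorem stmt5 :
    ∃ C : ℝ, 0 < C ∧
      ∀ φ : ℝ → ℂ, Measurable φ → (∃ M : ℝ, ∀ x, ‖φ x‖ ≤ M) →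
      ∀ f : ℝ → ℂ, Measurable f →
        MemLp (fun z : ℝ => (z : ℂ) * f z) 2 (volume : Measure ℝ) →
        ∀ t : ℝ, 1 ≤ t → ∀ x : ℝ,
          ‖rIntegral f t x‖ ≤ C * t ^ (-(1/4 : ℝ)) * weightedL2 f := by
  refine ⟨3, by norm_num, ?_⟩
  intro φ _ _ f hf hg t ht x
  have ht0 : (0:ℝ) < t := lt_of_lt_of_le one_pos ht
  set a : ℝ := Real.sqrt t with ha_def
  have ha1 : 1 ≤ a := by
    rw [show (1:ℝ) = Real.sqrt 1 by simp]
    exact Real.sqrt_le_sqrt ht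
  have ha0 : (0:ℝ) < a := lt_of_lt_of_le one_pos ha1
  have ha2 : a ^ 2 = t := Real.sq_sqrt ht0.le
  set g : ℝ → ℂ := fun z => (z:ℂ) * f z with hg_def
  set w : ℝ → ℝ := fun z => if |z| ≤ a then |z|/(4*t) else 2/|z| with hw_def
  have hw_nonneg : ∀ z, 0 ≤ w z := by
    intro z
    simp only [hw_def]
    split <;> positivity
  have hw_meas : Measurable w := by
    apply Measurable.ite (measurableSet_le measurable_abs measurable_const)
    · exact measurable_abs.div_const _
    · exact measurable_const.div measurable_abs
  have hgnorm : ∀ z, ‖g z‖ = |z| * ‖f z‖ := by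
    intro z
    simp [hg_def, Complex.norm_real]
  -- pointwise bound
  have hpt : ∀ z : ℝ,
      ‖Complex.exp (-I * x * z / (2 * t)) * (Complex.exp (I * (z : ℂ) ^ 2 / (4 * t)) - 1) * f z‖
        ≤ w z * ‖g z‖ := by
    intro z
    have htne : (t:ℂ) ≠ 0 := by exact_mod_cast ht0.ne'
    have hexp1 : (-I * (x:ℂ) * (z:ℂ) / (2 * (t:ℂ))) = ((-(x*z)/(2*t) : ℝ) : ℂ) * I := by
      push_cast
      field_simp
    have hexp2 : (I * (z:ℂ)^2 / (4 * (t:ℂ))) = ((z^2/(4*t) : ℝ) : ℂ) * I := by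
      push_cast
      field_simp
    rw [hexp1, hexp2, norm_mul, norm_mul,
      Complex.norm_exp_ofReal_mul_I, one_mul]
    by_cases hz : |z| ≤ a
    · have h2 : ‖Complex.exp ((((z^2/(4*t) : ℝ)) : ℂ) * I) - 1‖ ≤ z^2/(4*t) := by
        have h := aux_norm_le (z^2/(4*t))
        rwa [_root_.abs_of_nonneg (by positivity : (0:ℝ) ≤ z^2/(4*t))] at h
      have heq : w z * ‖g z‖ = z^2/(4*t) * ‖f z‖ := by
        rw [hgnorm z]
        simp only [hw_def]
        rw [if_pos hz]
        field_simp
        have habs : |z| * |z| = z ^ 2 := by rw [abs_mul_abs_self]; ring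
        rw [← habs]
        ring
      rw [heq]
      exact mul_le_mul_of_nonneg_right h2 (norm_nonneg _)
    · push_neg at hz
      have hzpos : (0:ℝ) < |z| := lt_trans ha0 hz
      have heq : w z * ‖g z‖ = 2 * ‖f z‖ := by
        rw [hgnorm z]
        simp only [hw_def]
        rw [if_neg (not_le.mpr hz)]
        field_simp
      rw [heq]
      exact mul_le_mul_of_nonneg_right (aux_norm_le2 _) (norm_nonneg _)
  -- decomposition of w^2
  set q : ℝ → ℝ := fun z => 4/z^2 with hq_def
  set u : ℝ → ℝ := Set.indicator (Icc (-a) a) (fun z => z^2/(16*t^2)) with hu_def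
  set v : ℝ → ℝ := Set.indicator ((Icc (-a) a)ᶜ) q with hv_def
  have hmem : ∀ z : ℝ, z ∈ Icc (-a) a ↔ |z| ≤ a := by
    intro z; rw [mem_Icc, abs_le]
  have hw2 : ∀ z, w z ^ 2 = u z + v z := by
    intro z
    by_cases hz : |z| ≤ a
    · rw [hu_def, hv_def, Set.indicator_of_mem ((hmem z).mpr hz),
        Set.indicator_of_notMem (by simp [(hmem z).mpr hz])]
      simp only [hw_def]
      rw [if_pos hz, div_pow, _root_.sq_abs]
      ring_nf
    · rw [hu_def, hv_def, Set.indicator_of_notMem (fun h => hz ((hmem z).mp h)),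
        Set.indicator_of_mem (Set.mem_compl fun h => hz ((hmem z).mp h))]
      simp only [hw_def, hq_def]
      rw [if_neg hz, div_pow, _root_.sq_abs]
      norm_num
  have hu_int : Integrable u :=
    ((continuous_pow 2).div_const _).integrableOn_Icc.integrable_indicator measurableSet_Icc
  have hq_Ioi : IntegrableOn q (Ioi a) := by
    have h0 : IntegrableOn (fun z:ℝ => 4 * z ^ (-2:ℝ)) (Ioi a) :=
      (integrableOn_Ioi_rpow_of_lt (by norm_num) ha0).const_mul 4
    refine h0.congr_fun (fun z hz => ?_) measurableSet_Ioi
    have hz0 : (0:ℝ) < z := lt_trans ha0 hz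
    show (4:ℝ) * z ^ (-2:ℝ) = 4 / z ^ 2
    rw [Real.rpow_neg hz0.le, show (2:ℝ) = ((2:ℕ):ℝ) by norm_num, Real.rpow_natCast,
      div_eq_mul_inv]
  have hq_Iio : IntegrableOn q (Iio (-a)) := by
    have A : MeasurableEmbedding (fun x : ℝ => -x) :=
      (Homeomorph.neg ℝ).isClosedEmbedding.measurableEmbedding
    have hcomp : (fun y : ℝ => (Set.indicator (Iio (-a)) q) (-y)) = Set.indicator (Ioi a) q := by
      funext y
      by_cases hy : a < y
      · rw [Set.indicator_of_mem (by simpa using hy : -y ∈ Iio (-a)),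
          Set.indicator_of_mem (by exact hy)]
        simp [hq_def]
      · rw [Set.indicator_of_notMem (by simpa using hy),
          Set.indicator_of_notMem (by simpa using hy)]
    rw [← integrable_indicator_iff measurableSet_Iio,
      ← Measure.map_neg_eq_self (volume : Measure ℝ), A.integrable_map_iff]
    show Integrable ((Set.indicator (Iio (-a)) q) ∘ (fun y => -y)) volume
    rw [show (Set.indicator (Iio (-a)) q) ∘ (fun y : ℝ => -y) = Set.indicator (Ioi a) q from
      funext fun y => congrFun hcomp y]
    exact hq_Ioi.integrable_indicator measurableSet_Ioi
  have hIcc_compl : (Icc (-a) a)ᶜ = Iio (-a) ∪ Ioi a := by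
    ext z
    simp only [Set.mem_compl_iff, mem_Icc, mem_union, mem_Iio, mem_Ioi, not_and_or, not_le]
  have hqc_int : IntegrableOn q ((Icc (-a) a)ᶜ) := by
    rw [hIcc_compl]; exact hq_Iio.union hq_Ioi
  have hv_int : Integrable v := hqc_int.integrable_indicator measurableSet_Icc.compl
  have hw2_int : Integrable (fun z => w z ^ 2) :=
    (hu_int.add hv_int).congr (ae_of_all _ fun z => (hw2 z).symm)
  -- integral values
  have hIoi_val : ∫ z in Ioi a, q z = 4 * a⁻¹ := by
    have heq : EqOn q (fun z:ℝ => 4 * z ^ (-2:ℝ)) (Ioi a) := by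
      intro z hz
      have hz0 : (0:ℝ) < z := lt_trans ha0 hz
      show (4:ℝ) / z ^ 2 = 4 * z ^ (-2:ℝ)
      rw [Real.rpow_neg hz0.le, show (2:ℝ) = ((2:ℕ):ℝ) by norm_num,
        Real.rpow_natCast, div_eq_mul_inv]
    rw [setIntegral_congr_fun measurableSet_Ioi heq, integral_const_mul,
      integral_Ioi_rpow_of_lt (by norm_num) ha0]
    norm_num [Real.rpow_neg_one]
  have hIio_val : ∫ z in Iio (-a), q z = 4 * a⁻¹ := by
    rw [← integral_Iic_eq_integral_Iio, ← integral_comp_neg_Ioi]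
    have : (fun z : ℝ => q (-z)) = q := by
      funext z; simp [hq_def]
    rw [this, hIoi_val]
  have hv_val : ∫ z, v z = 8 * a⁻¹ := by
    have hdisj : Disjoint (Iio (-a)) (Ioi a) := by
      rw [Set.disjoint_left]
      intro z hz1 hz2
      simp only [mem_Iio] at hz1
      simp only [mem_Ioi] at hz2
      linarith
    rw [hv_def, integral_indicator measurableSet_Icc.compl, hIcc_compl,
      setIntegral_union hdisj measurableSet_Ioi hq_Iio hq_Ioi, hIio_val, hIoi_val]
    ring
  have hu_val : ∫ z, u z = (2*a^3/3) / (16*t^2) := by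
    rw [hu_def, integral_indicator measurableSet_Icc,
      MeasureTheory.integral_Icc_eq_integral_Ioc,
      ← intervalIntegral.integral_of_le (by linarith : -a ≤ a),
      intervalIntegral.integral_div, integral_pow]
    ring
  have hw2_le : ∫ z, w z ^ 2 ≤ 9 * a⁻¹ := by
    rw [show (fun z => w z ^ 2) = fun z => u z + v z from funext hw2,
      integral_add hu_int hv_int, hu_val, hv_val]
    rw [← ha2]
    have h1 : (2*a^3/3) / (16*(a^2)^2) = 1/(24*a) := by
      field_simp; ring
    rw [h1]
    have h2 : 1/(24*a) ≤ 1/a := one_div_le_one_div_of_le ha0 (by linarith)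
    rw [one_div a] at h2
    linarith
  -- integrability of w * ‖g‖
  have hgmeas : AEStronglyMeasurable g volume :=
    (Complex.measurable_ofReal.mul hf).aestronglyMeasurable
  have hgn2 : Integrable (fun z => ‖g z‖ ^ 2) := hg.norm.integrable_sq
  have hwg_int : Integrable (fun z => w z * ‖g z‖) := by
    apply Integrable.mono' ((hw2_int.add hgn2).div_const 2)
      (hw_meas.aestronglyMeasurable.mul hgmeas.norm)
    refine ae_of_all _ fun z => ?_
    simp only [Pi.mul_apply, Pi.add_apply]
    rw [Real.norm_eq_abs, _root_.abs_of_nonneg (mul_nonneg (hw_nonneg z) (norm_nonneg _))]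
    nlinarith [sq_nonneg (w z - ‖g z‖)]
  -- step 1
  have step1 : ‖rIntegral f t x‖ ≤ ∫ z, w z * ‖g z‖ := by
    refine (norm_integral_le_integral_norm _).trans ?_
    exact integral_mono_of_nonneg (ae_of_all _ fun z => norm_nonneg _) hwg_int (ae_of_all _ hpt)
  -- Hölder
  have hofr : ENNReal.ofReal (2:ℝ) = 2 := by
    rw [ENNReal.ofReal_ofNat]
  have hW2 : MemLp w (ENNReal.ofReal 2) volume := by
    rw [hofr]
    exact (memLp_two_iff_integrable_sq hw_meas.aestronglyMeasurable).mpr hw2_int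
  have hG2 : MemLp (fun z => ‖g z‖) (ENNReal.ofReal 2) volume := by
    rw [hofr]; exact hg.norm
  have holder := MeasureTheory.integral_mul_le_Lp_mul_Lq_of_nonneg
    Real.HolderConjugate.two_two
    (ae_of_all _ hw_nonneg) (ae_of_all _ fun z => norm_nonneg (g z)) hW2 hG2
  simp only [show ∀ y : ℝ, y ^ (2:ℝ) = y ^ 2 from fun y => by
    rw [show (2:ℝ) = ((2:ℕ):ℝ) by norm_num, Real.rpow_natCast]] at holder
  -- identify the g factor with weightedL2
  have hgeq : (∫ z, ‖g z‖ ^ 2) = ∫ z : ℝ, |z| ^ 2 * ‖f z‖ ^ 2 := by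
    refine integral_congr_ae (ae_of_all _ fun z => ?_)
    show ‖g z‖ ^ 2 = |z| ^ 2 * ‖f z‖ ^ 2
    rw [hgnorm z, mul_pow]
  -- bound the w factor
  have hta : t ^ (-(1/2):ℝ) = a⁻¹ := by
    rw [Real.rpow_neg ht0.le, ha_def, Real.sqrt_eq_rpow]
  have hwfac : (∫ z, w z ^ 2) ^ ((1:ℝ)/2) ≤ 3 * t ^ (-(1/4):ℝ) := by
    have h9 : ((9:ℝ) * t ^ (-(1/2):ℝ)) ^ ((1:ℝ)/2) = 3 * t ^ (-(1/4):ℝ) := by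
      rw [Real.mul_rpow (by norm_num) (Real.rpow_nonneg ht0.le _),
        show (9:ℝ) = 3 ^ (2:ℕ) by norm_num, ← Real.rpow_natCast 3 2]
      rw [← Real.rpow_mul (by norm_num : (0:ℝ) ≤ 3), ← Real.rpow_mul ht0.le]
      norm_num
    rw [← h9]
    apply Real.rpow_le_rpow (integral_nonneg fun z => sq_nonneg _) _ (by norm_num)
    rw [hta]
    linarith [hw2_le]
  -- assemble
  calc ‖rIntegral f t x‖ ≤ ∫ z, w z * ‖g z‖ := step1
  _ ≤ (∫ z, w z ^ 2) ^ ((1:ℝ)/2) * (∫ z, ‖g z‖ ^ 2) ^ ((1:ℝ)/2) := holder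
  _ ≤ (3 * t ^ (-(1/4):ℝ)) * (∫ z, ‖g z‖ ^ 2) ^ ((1:ℝ)/2) :=
      mul_le_mul_of_nonneg_right hwfac
        (Real.rpow_nonneg (integral_nonneg fun z => sq_nonneg _) _)
  _ = 3 * t ^ (-(1/4):ℝ) * weightedL2 f := by
      rw [weightedL2, hgeq]
end

section
/- Let (𝒞_α) be the cluster partition satisfying the separation property: for n₁ ∈ 𝒞_{α₁}, n ∈ 𝒞_{α₂} with α₁ ≠ α₂, |n₁−n| + |λ_{n₁}² − λ_n²| > (|n₁|+|n|)^{c(d)}. Suppose n₁ − n₂ + n₃ = n, |Ω(n₁,n₂,n₃,n)| < 1, n₁ and n lie in different clusters, (n₁*)^{c(d)} ≥ 2, and |n₁| = n₁* is the maximum among |n₁|,|n₂|,|n₃|. Then max(|n₂|,|n₃|) ≥ c' (n₁*)^{c(d)/2} for a constant c' > 0 depending only on A. -/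
open scoped BigOperators

lemma znorm_nonneg' {d : ℕ} (n : Fin d → ℤ) : 0 ≤ znorm n := Real.sqrt_nonneg _

lemma coord_le_znorm {d : ℕ} (n : Fin d → ℤ) (i : Fin d) : |(n i : ℝ)| ≤ znorm n := by
  rw [← Real.sqrt_sq_eq_abs]
  exact Real.sqrt_le_sqrt (Finset.single_le_sum (f := fun j => ((n j : ℝ)) ^ 2)
    (fun j _ => sq_nonneg _) (Finset.mem_univ i))

lemma znorm_eq_norm {d : ℕ} (m : Fin d → ℤ) :
    znorm m = ‖(WithLp.equiv 2 (Fin d → ℝ)).symm (fun i => (m i : ℝ))‖ := by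
  rw [EuclideanSpace.norm_eq]
  simp only [WithLp.equiv_symm_apply, PiLp.toLp_apply, Real.norm_eq_abs, sq_abs]
  rfl

lemma znorm_sub_le {d : ℕ} (a b : Fin d → ℤ) : znorm (a - b) ≤ znorm a + znorm b := by
  rw [znorm_eq_norm, znorm_eq_norm, znorm_eq_norm]
  have h : (WithLp.equiv 2 (Fin d → ℝ)).symm (fun i => ((a - b) i : ℝ))
      = (WithLp.equiv 2 (Fin d → ℝ)).symm (fun i => (a i : ℝ))
        - (WithLp.equiv 2 (Fin d → ℝ)).symm (fun i => (b i : ℝ)) := by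
    ext i
    simp [Pi.sub_apply]
  rw [h]
  exact norm_sub_le _ _

lemma arith_step (C X M : ℝ) (hC0 : 0 ≤ C) (hXnn : 0 ≤ X) (hMnn : 0 ≤ M)
    (h2 : 2 ≤ X * X) (hkey : X * X < 4 * M + 4 * C * M ^ 2) :
    X < (4 + 4 * C) * M := by
  rcases le_or_gt 1 M with hM1 | hM1
  · have h4 : 4 * M ≤ 4 * M ^ 2 := by nlinarith
    have h1 : X ^ 2 < ((4 + 4 * C) * M) ^ 2 := by nlinarith
    exact lt_of_pow_lt_pow_left₀ 2 (by positivity) h1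
  · have hMM : M ^ 2 ≤ M := by nlinarith
    have hX1 : 1 ≤ X := by nlinarith
    have hXX : X ≤ X * X := by nlinarith
    nlinarith

lemma lamSq_bound {d : ℕ} (A : Matrix (Fin d) (Fin d) ℝ) (m : Fin d → ℤ) :
    |lamSq A m| ≤ (∑ i, ∑ j, |A i j|) * znorm m ^ 2 := by
  have hz := znorm_nonneg' m
  have key : ∀ i, |(m i : ℝ) * ∑ j, A i j * (m j : ℝ)| ≤ ∑ j, |A i j| * znorm m ^ 2 := by
    intro i
    rw [abs_mul]
    calc |(m i : ℝ)| * |∑ j, A i j * (m j : ℝ)|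
        ≤ znorm m * ∑ j, |A i j| * znorm m := by
          apply mul_le_mul (coord_le_znorm m i) ?_ (abs_nonneg _) hz
          calc |∑ j, A i j * (m j : ℝ)| ≤ ∑ j, |A i j * (m j : ℝ)| :=
                Finset.abs_sum_le_sum_abs _ _
            _ ≤ ∑ j, |A i j| * znorm m := by
                apply Finset.sum_le_sum
                intro j _
                rw [abs_mul]
                exact mul_le_mul_of_nonneg_left (coord_le_znorm m j) (abs_nonneg _)
      _ = ∑ j, |A i j| * znorm m ^ 2 := by
          rw [Finset.mul_sum]
          congr 1
          ext j
          ring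
  calc |lamSq A m| = |∑ i, (m i : ℝ) * ∑ j, A i j * (m j : ℝ)| := by
        unfold lamSq quadA dotProduct Matrix.mulVec
        rfl
    _ ≤ ∑ i, |(m i : ℝ) * ∑ j, A i j * (m j : ℝ)| := Finset.abs_sum_le_sum_abs _ _
    _ ≤ ∑ i, ∑ j, |A i j| * znorm m ^ 2 := Finset.sum_le_sum fun i _ => key i
    _ = (∑ i, ∑ j, |A i j|) * znorm m ^ 2 := by rw [Finset.sum_mul]; congr 1; ext i; rw [Finset.sum_mul]

/-- If `n₁ − n₂ + n₃ = n`, `|Ω| < 1`, `n₁` and `n` lie in different clusters of a partition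
with the separation property, `(n₁*)^{c(d)} ≥ 2`, and `|n₁|` is the largest among
`|n₁|,|n₂|,|n₃|`, then `max(|n₂|,|n₃|) ≥ c' |n₁|^{c(d)/2}`, `c' > 0` depending only on `A`. -/
theorem stmt11 {d : ℕ} (A : Matrix (Fin d) (Fin d) ℝ) (hsymm : A.IsSymm) (hpos : A.PosDef)
    (cd : ℝ) (hcd : 0 < cd) (hcd2 : cd ≤ 2)
    (𝒞 : ℕ → Set (Fin d → ℤ))
    (hsep : ∀ α₁ α₂ : ℕ, α₁ ≠ α₂ → ∀ m₁ ∈ 𝒞 α₁, ∀ m₂ ∈ 𝒞 α₂,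
      (znorm m₁ + znorm m₂) ^ cd < znorm (m₁ - m₂) + |lamSq A m₁ - lamSq A m₂|) :
    ∃ c' : ℝ, 0 < c' ∧ ∀ (n₁ n₂ n₃ n : Fin d → ℤ) (α₁ α₂ : ℕ),
      α₁ ≠ α₂ → n₁ ∈ 𝒞 α₁ → n ∈ 𝒞 α₂ →
      n₁ - n₂ + n₃ = n → |Om A n₁ n₂ n₃ n| < 1 →
      2 ≤ znorm n₁ ^ cd →
      znorm n₂ ≤ znorm n₁ → znorm n₃ ≤ znorm n₁ →
      c' * znorm n₁ ^ (cd / 2) ≤ max (znorm n₂) (znorm n₃) := by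
  set C : ℝ := ∑ i, ∑ j, |A i j| with hC
  have hC0 : 0 ≤ C := Finset.sum_nonneg fun i _ => Finset.sum_nonneg fun j _ => abs_nonneg _
  set K : ℝ := 4 + 4 * C with hK
  have hKpos : 0 < K := by positivity
  refine ⟨1 / K, by positivity, ?_⟩
  intro n₁ n₂ n₃ n α₁ α₂ hne h₁ h₂ hmom hOm hxcd hn₂ hn₃
  set x := znorm n₁ with hx
  set M := max (znorm n₂) (znorm n₃) with hM
  have hM2 : znorm n₂ ≤ M := le_max_left _ _
  have hM3 : znorm n₃ ≤ M := le_max_right _ _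
  have hMnn : 0 ≤ M := le_trans (znorm_nonneg' n₂) hM2
  have hxnn : 0 ≤ x := znorm_nonneg' n₁
  have hxpos : 0 < x := by
    rcases hxnn.lt_or_eq with h | h
    · exact h
    · exfalso
      rw [← h, Real.zero_rpow hcd.ne'] at hxcd
      linarith
  set X : ℝ := x ^ (cd / 2) with hX
  have hXnn : 0 ≤ X := Real.rpow_nonneg hxnn _
  have hX2 : X * X = x ^ cd := by
    rw [hX, ← Real.rpow_add hxpos]
    norm_num
  -- main separation chain
  have hchain : x ^ cd < znorm (n₁ - n) + |lamSq A n₁ - lamSq A n| := by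
    have h1 : x ^ cd ≤ (znorm n₁ + znorm n) ^ cd :=
      Real.rpow_le_rpow hxnn (by linarith [znorm_nonneg' n]) hcd.le
    exact lt_of_le_of_lt h1 (hsep α₁ α₂ hne n₁ h₁ n h₂)
  have hdiff : n₁ - n = n₂ - n₃ := by
    rw [← hmom]; ring
  have h4 : znorm (n₁ - n) ≤ 2 * M := by
    rw [hdiff]
    calc znorm (n₂ - n₃) ≤ znorm n₂ + znorm n₃ := znorm_sub_le _ _
      _ ≤ 2 * M := by linarith
  have h5 : |lamSq A n₁ - lamSq A n| ≤ 1 + 2 * C * M ^ 2 := by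
    have e : lamSq A n₁ - lamSq A n = Om A n₁ n₂ n₃ n + (lamSq A n₂ - lamSq A n₃) := by
      unfold Om; ring
    have b2 := lamSq_bound A n₂
    have b3 := lamSq_bound A n₃
    have hsq2 : znorm n₂ ^ 2 ≤ M ^ 2 := by nlinarith [znorm_nonneg' n₂]
    have hsq3 : znorm n₃ ^ 2 ≤ M ^ 2 := by nlinarith [znorm_nonneg' n₃]
    have hC2 : C * znorm n₂ ^ 2 ≤ C * M ^ 2 := mul_le_mul_of_nonneg_left hsq2 hC0
    have hC3 : C * znorm n₃ ^ 2 ≤ C * M ^ 2 := mul_le_mul_of_nonneg_left hsq3 hC0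
    calc |lamSq A n₁ - lamSq A n|
        ≤ |Om A n₁ n₂ n₃ n| + |lamSq A n₂ - lamSq A n₃| := by rw [e]; exact abs_add_le _ _
      _ ≤ |Om A n₁ n₂ n₃ n| + (|lamSq A n₂| + |lamSq A n₃|) := by
          linarith [abs_sub (lamSq A n₂) (lamSq A n₃)]
      _ ≤ 1 + 2 * C * M ^ 2 := by
          have := abs_sub_abs_le_abs_sub (lamSq A n₂) (lamSq A n₃)
          linarith [abs_sub_le_iff.mp (le_refl |lamSq A n₂ - lamSq A n₃|)]
  have hkey : X * X < 4 * M + 4 * C * M ^ 2 := by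
    rw [hX2]
    linarith
  have h2XX : 2 ≤ X * X := by rw [hX2]; exact hxcd
  have hXKM : X < K * M := by
    rw [hK]
    exact arith_step C X M hC0 hXnn hMnn h2XX hkey
  calc 1 / K * X = X / K := by ring
    _ ≤ M := by rw [div_le_iff₀ hKpos]; linarith
end

section
/- Fix ξ ∈ ℝ and a partition of ℤ^d into clusters (𝒞_α). Let α₀ ∈ ℕ and for each high-frequency cluster α ≥ α₀ and n ∈ 𝒞_α define Λ⁽¹⁾(n) as a set of triples (n₁,n₂,n₃) with n₁ − n₂ + n₃ = n, n₁ ∈ 𝒞_α, and |n₂|, |n₃| strictly below a threshold ensuring n₂, n₃ ∉ 𝒞_α. Consider the ODE system: for n ∈ ⋃_{α≥α₀}𝒞_α, i d/dt a_n = 2 Σ_{(n₁,n₂,n₃)∈Λ⁽¹⁾(n)} e^{itΩ(n₁,n₂,n₃,n)} a_{n₁} conj(a_{n₂}) a_{n₃}, and i d/dt a_n = 0 otherwise. Then for every α ≥ α₀ and every C¹ solution a(t) with values in ℓ²(ℤ^d) supported on finitely many modes, the super-action Σ_{n∈𝒞_α} |a_n(t)|² is constant in time. -/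
open scoped BigOperators

lemma Om_swap {d : ℕ} (A : Matrix (Fin d) (Fin d) ℝ) (n₁ n₂ n₃ n : Fin d → ℤ) :
    Om A n n₃ n₂ n₁ = - Om A n₁ n₂ n₃ n := by
  simp [Om]; ring

open scoped Classical in
/-- Conservation of the super-actions by the effective quasi-resonant system: for any
finitely supported `C¹` solution of the effective system, `Σ_{n∈𝒞_α}|a_n(t)|²` is
constant in time for every high-frequency cluster `α ≥ α₀`. -/
theorem stmt12 {d : ℕ} (A : Matrix (Fin d) (Fin d) ℝ)
    (𝒞 : ℕ → Set (Fin d → ℤ)) (hpart : ∀ n : Fin d → ℤ, ∃! α : ℕ, n ∈ 𝒞 α)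
    (α₀ : ℕ) (θ : ℕ → ℝ)
    (hθ : ∀ α : ℕ, α₀ ≤ α → ∀ m : Fin d → ℤ, znorm m < θ α → m ∉ 𝒞 α)
    (a a' : ℝ → (Fin d → ℤ) → ℂ) (S : Finset (Fin d → ℤ))
    (hsupp : ∀ (t : ℝ) (n : Fin d → ℤ), n ∉ S → a t n = 0)
    (hderiv : ∀ (n : Fin d → ℤ) (t : ℝ), HasDerivAt (fun t => a t n) (a' t n) t)
    (heq_high : ∀ (t : ℝ) (α : ℕ), α₀ ≤ α → ∀ n ∈ 𝒞 α,
      Complex.I * a' t n =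
        2 * ∑' p : (Fin d → ℤ) × (Fin d → ℤ) × (Fin d → ℤ),
          if p.1 - p.2.1 + p.2.2 = n ∧ p.1 ∈ 𝒞 α ∧ znorm p.2.1 < θ α ∧ znorm p.2.2 < θ α then
            Complex.exp (Complex.I * (t : ℂ) * (Om A p.1 p.2.1 p.2.2 n : ℝ)) *
              a t p.1 * (starRingEnd ℂ) (a t p.2.1) * a t p.2.2
          else 0)
    (heq_low : ∀ (t : ℝ) (n : Fin d → ℤ), (¬ ∃ α : ℕ, α₀ ≤ α ∧ n ∈ 𝒞 α) →
      Complex.I * a' t n = 0) :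
    ∀ (α : ℕ), α₀ ≤ α → ∀ t : ℝ,
      (∑ n ∈ S.filter (fun n => n ∈ 𝒞 α), ‖a t n‖ ^ 2)
        = ∑ n ∈ S.filter (fun n => n ∈ 𝒞 α), ‖a 0 n‖ ^ 2 := by
  intro α hα
  set Sα : Finset (Fin d → ℤ) := S.filter (fun n => n ∈ 𝒞 α) with hSα
  -- the key zero-derivative claim
  have key : ∀ s : ℝ, HasDerivAt (fun u => ∑ n ∈ Sα, ‖a u n‖ ^ 2) 0 s := by
    intro s
    -- derivative of each term
    have hterm : ∀ n ∈ Sα, HasDerivAt (fun u => ‖a u n‖ ^ 2)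
        (2 * (a' s n * (starRingEnd ℂ) (a s n)).re) s := by
      intro n _
      have h1 : HasDerivAt (fun u => a u n * (starRingEnd ℂ) (a u n))
          (a' s n * (starRingEnd ℂ) (a s n) + a s n * (starRingEnd ℂ) (a' s n)) s := by
        simpa [Pi.mul_def] using (hderiv n s).mul ((hderiv n s).star)
      have h2 := (Complex.reCLM.hasFDerivAt.comp_hasDerivAt s h1)
      have h3 : (a' s n * (starRingEnd ℂ) (a s n) + a s n * (starRingEnd ℂ) (a' s n)).re
          = 2 * (a' s n * (starRingEnd ℂ) (a s n)).re := by
        have : a s n * (starRingEnd ℂ) (a' s n)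
            = (starRingEnd ℂ) (a' s n * (starRingEnd ℂ) (a s n)) := by
          rw [map_mul]; simp [mul_comm]
        rw [this]
        simp [Complex.add_re, Complex.conj_re]; ring
      have h4 : (fun u => (Complex.reCLM : ℂ →L[ℝ] ℝ) (a u n * (starRingEnd ℂ) (a u n)))
          = fun u => ‖a u n‖ ^ 2 := by
        funext u
        simp only [Complex.reCLM_apply]
        rw [Complex.mul_conj]
        rw [Complex.ofReal_re, Complex.normSq_eq_norm_sq]
      rw [← h3, ← h4]
      exact h2
    have hsum := HasDerivAt.sum hterm
    -- now show the total derivative is zero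
    have hzero : ∑ n ∈ Sα, 2 * (a' s n * (starRingEnd ℂ) (a s n)).re = 0 := by
      -- express a' via the equation
      set P : Finset ((Fin d → ℤ) × (Fin d → ℤ) × (Fin d → ℤ)) := S ×ˢ S ×ˢ S with hP
      set G : (Fin d → ℤ) → ((Fin d → ℤ) × (Fin d → ℤ) × (Fin d → ℤ)) → ℂ := fun n p =>
        if p.1 - p.2.1 + p.2.2 = n ∧ p.1 ∈ 𝒞 α ∧ znorm p.2.1 < θ α ∧ znorm p.2.2 < θ α then
          Complex.exp (Complex.I * (s : ℂ) * (Om A p.1 p.2.1 p.2.2 n : ℝ)) *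
            a s p.1 * (starRingEnd ℂ) (a s p.2.1) * a s p.2.2
        else 0 with hG
      have hGzero : ∀ n, ∀ p ∉ P, G n p = 0 := by
        intro n p hp
        simp only [hP, Finset.mem_product, not_and_or] at hp
        simp only [hG]
        rcases hp with h | h | h
        · split_ifs with hc
          · rw [hsupp s p.1 h]; ring
          · rfl
        · split_ifs with hc
          · rw [hsupp s p.2.1 h]; simp
          · rfl
        · split_ifs with hc
          · rw [hsupp s p.2.2 h]; ring
          · rfl
      have ha' : ∀ n ∈ Sα, a' s n = -Complex.I * (2 * ∑ p ∈ P, G n p) := by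
        intro n hn
        have hn' : n ∈ 𝒞 α := (Finset.mem_filter.mp hn).2
        have h := heq_high s α hα n hn'
        have htsum : (∑' p : (Fin d → ℤ) × (Fin d → ℤ) × (Fin d → ℤ), G n p)
            = ∑ p ∈ P, G n p := tsum_eq_sum (hGzero n)
        rw [show (∑' p : (Fin d → ℤ) × (Fin d → ℤ) × (Fin d → ℤ),
          if p.1 - p.2.1 + p.2.2 = n ∧ p.1 ∈ 𝒞 α ∧ znorm p.2.1 < θ α ∧ znorm p.2.2 < θ α then
            Complex.exp (Complex.I * (s : ℂ) * (Om A p.1 p.2.1 p.2.2 n : ℝ)) *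
              a s p.1 * (starRingEnd ℂ) (a s p.2.1) * a s p.2.2
          else 0) = ∑' p, G n p from rfl, htsum] at h
        have := congrArg (fun z => -Complex.I * z) h
        simpa [← mul_assoc, Complex.I_mul_I] using this
      -- the big double sum
      set Q : Finset ((Fin d → ℤ) × (Fin d → ℤ) × (Fin d → ℤ) × (Fin d → ℤ)) :=
        Sα ×ˢ Sα ×ˢ S ×ˢ S with hQ
      set H : ((Fin d → ℤ) × (Fin d → ℤ) × (Fin d → ℤ) × (Fin d → ℤ)) → ℂ :=
        fun q => (starRingEnd ℂ) (a s q.1) * G q.1 q.2 with hH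
      set B : ℂ := ∑ q ∈ Q, H q with hB
      -- rewrite the derivative sum in terms of B
      have hre : ∑ n ∈ Sα, 2 * (a' s n * (starRingEnd ℂ) (a s n)).re
          = ((-4 : ℂ) * Complex.I * B).re := by
        have hB2 : B = ∑ n ∈ Sα, (starRingEnd ℂ) (a s n) * ∑ p ∈ P, G n p := by
          have hsub : Q ⊆ Sα ×ˢ P := by
            intro q hq
            simp only [hQ, hP, Finset.mem_product] at hq ⊢
            exact ⟨hq.1, Finset.mem_of_mem_filter _ hq.2.1, hq.2.2.1, hq.2.2.2⟩
          have hz : ∀ q ∈ Sα ×ˢ P, q ∉ Q → H q = 0 := by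
            intro q hq hq'
            simp only [Finset.mem_product, hP] at hq
            simp only [hQ, hP, Finset.mem_product] at hq'
            have h21' : q.2.1 ∉ 𝒞 α := by
              intro hmem
              exact hq' ⟨hq.1, Finset.mem_filter.mpr ⟨hq.2.1, hmem⟩, hq.2.2.1, hq.2.2.2⟩
            simp only [hH, hG]
            rw [if_neg (by tauto)]
            ring
          rw [hB, Finset.sum_subset hsub hz]
          simp only [hH]
          rw [Finset.sum_product]
          exact Finset.sum_congr rfl fun n _ => by rw [Finset.mul_sum]
        calc ∑ n ∈ Sα, 2 * (a' s n * (starRingEnd ℂ) (a s n)).re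
            = ∑ n ∈ Sα, ((-4 :ℂ) * Complex.I *
                ((starRingEnd ℂ) (a s n) * ∑ p ∈ P, G n p)).re := by
              refine Finset.sum_congr rfl fun n hn => ?_
              rw [ha' n hn]
              rw [show (-4 :ℂ) * Complex.I * ((starRingEnd ℂ) (a s n) * ∑ p ∈ P, G n p)
                = 2 * (-Complex.I * (2 * ∑ p ∈ P, G n p) * (starRingEnd ℂ) (a s n)) by ring]
              simp [Complex.mul_re]
              ring
          _ = ((-4 : ℂ) * Complex.I * B).re := by
              rw [hB2, Finset.mul_sum, Complex.re_sum]
      -- symmetry: B is self-conjugate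
      have hconj : (starRingEnd ℂ) B = B := by
        rw [hB, map_sum]
        refine Finset.sum_nbij' (fun q => (q.2.1, q.1, q.2.2.2, q.2.2.1))
          (fun q => (q.2.1, q.1, q.2.2.2, q.2.2.1)) ?_ ?_ ?_ ?_ ?_
        · intro q hq
          simp only [hQ, Finset.mem_product] at hq ⊢
          exact ⟨hq.2.1, hq.1, hq.2.2.2, hq.2.2.1⟩
        · intro q hq
          simp only [hQ, Finset.mem_product] at hq ⊢
          exact ⟨hq.2.1, hq.1, hq.2.2.2, hq.2.2.1⟩
        · intro q _; rfl
        · intro q _; rfl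
        · rintro ⟨n, n₁, n₂, n₃⟩ hq
          simp only [hQ, Finset.mem_product] at hq
          have hnα : n ∈ 𝒞 α := (Finset.mem_filter.mp hq.1).2
          have hn₁α : n₁ ∈ 𝒞 α := (Finset.mem_filter.mp hq.2.1).2
          simp only [hH, hG]
          by_cases hc : n₁ - n₂ + n₃ = n ∧ znorm n₂ < θ α ∧ znorm n₃ < θ α
          · have hc' : n - n₃ + n₂ = n₁ := by rw [← hc.1]; abel
            rw [if_pos ⟨hc.1, hn₁α, hc.2.1, hc.2.2⟩, if_pos ⟨hc', hnα, hc.2.2, hc.2.1⟩]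
            have hOm : Om A n n₃ n₂ n₁ = - Om A n₁ n₂ n₃ n := Om_swap A n₁ n₂ n₃ n
            have hexp : Complex.exp (Complex.I * (s : ℂ) * (Om A n n₃ n₂ n₁ : ℝ))
                = (starRingEnd ℂ) (Complex.exp (Complex.I * (s : ℂ) * (Om A n₁ n₂ n₃ n : ℝ))) := by
              rw [← Complex.exp_conj]
              congr 1
              simp only [map_mul, Complex.conj_I, Complex.conj_ofReal, hOm]
              push_cast
              ring
            simp only [map_mul, hexp, RingHom.id_apply, Complex.conj_conj]
            ring
          · rw [if_neg (by tauto), if_neg ?_]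
            · simp
            · rintro ⟨h1, _, h3, h4⟩
              exact hc ⟨by rw [← h1]; abel, h4, h3⟩
      have hBim : B.im = 0 := by
        have := congrArg Complex.im hconj
        simp only [Complex.conj_im] at this
        linarith
      rw [hre]
      simp [Complex.mul_re, Complex.mul_im, hBim]
    rw [← hzero]
    simpa only [Finset.sum_fn] using hsum
  -- conclude constancy
  intro t
  have hdiff : Differentiable ℝ (fun u => ∑ n ∈ Sα, ‖a u n‖ ^ 2) :=
    fun s => (key s).differentiableAt
  have hd0 : ∀ s, deriv (fun u => ∑ n ∈ Sα, ‖a u n‖ ^ 2) s = 0 :=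
    fun s => (key s).deriv
  exact is_const_of_deriv_eq_zero hdiff hd0 t 0
end
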